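/- arXiv:1011.2806 — 4 statements merged into one kernel-verified Lean document; each statement's English description precedes it below -/
import Mathlib

section
/- Let F(s,u) = γ(s) + uξ(s) be the asymptotic completion of a ruled Möbius strip with s an arc-length parameter of γ and |ξ(s)| = 1, and set ν(s) := (γ'(s) × ξ(s)) / |γ'(s) × ξ(s)| and λ(s,u) := det(F_s(s,u), F_u(s,u), ν(s)). Then for all (s,u) ∈ ℝ², ∂λ/∂u (s,u) = (γ'(s)·ξ'(s)) / |γ'(s) × ξ(s)|. Consequently, if F is developable, then at every singular point of F (where necessarily γ'(s)·ξ'(s) ≠ 0) one has ∂λ/∂u ≠ 0, so every singular point of F is non-degenerate. -/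
open scoped RealInnerProductSpace
open Real Set Filter Topology

noncomputable section

/-- Euclidean 3-space. -/
abbrev E3 : Type := EuclideanSpace ℝ (Fin 3)

/-- The cross (vector) product in `ℝ³`. -/
def cross3 (a b : E3) : E3 :=
  (WithLp.equiv 2 (Fin 3 → ℝ)).symm
    ![a 1 * b 2 - a 2 * b 1, a 2 * b 0 - a 0 * b 2, a 0 * b 1 - a 1 * b 0]

/-- The determinant of three vectors in `ℝ³`. -/
def det3 (a b c : E3) : ℝ :=
  Matrix.det (Matrix.of ![(fun i => a i), (fun i => b i), (fun i => c i)])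

lemma inner3 (a b : E3) : ⟪a,b⟫ = a 0 * b 0 + a 1 * b 1 + a 2 * b 2 := by
  simp [PiLp.inner_apply, Fin.sum_univ_three, RCLike.inner_apply]; ring

lemma cross3_apply (a b : E3) (i : Fin 3) :
    cross3 a b i = ![a 1 * b 2 - a 2 * b 1, a 2 * b 0 - a 0 * b 2, a 0 * b 1 - a 1 * b 0] i := rfl

lemma det3_eq (a b c : E3) : det3 a b c = ⟪cross3 a b, c⟫ := by
  simp [det3, Matrix.det_fin_three, inner3, cross3_apply, Fin.sum_univ_three]; ring

lemma crossInner (a b c d : E3) :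
    ⟪cross3 a b, cross3 c d⟫ = ⟪a,c⟫*⟪b,d⟫ - ⟪a,d⟫*⟪b,c⟫ := by
  simp [inner3, cross3_apply, Fin.sum_univ_three]; ring

lemma add_smul_apply' (a d : E3) (u : ℝ) (i : Fin 3) : (a + u • d) i = a i + u * d i := rfl

lemma cross_add_smul (a d b : E3) (u : ℝ) :
    cross3 (a + u • d) b = cross3 a b + u • cross3 d b := by
  ext i
  fin_cases i <;> simp [cross3_apply, add_smul_apply'] <;> ring

lemma det_add_smul (a d b c : E3) (u : ℝ) :
    det3 (a + u • d) b c = det3 a b c + u * det3 d b c := by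
  simp [det3_eq, cross_add_smul, inner_add_left, real_inner_smul_left, Fin.sum_univ_three,
    PiLp.inner_apply, RCLike.inner_apply]
  ring

/-- The relevant determinant value. -/
lemma detval (a b d : E3) (hbb : ⟪b,b⟫ = (1:ℝ)) (hdb : ⟪d,b⟫ = (0:ℝ)) :
    det3 d b (‖cross3 a b‖⁻¹ • cross3 a b) = ⟪a,d⟫ / ‖cross3 a b‖ := by
  rw [det3_eq, real_inner_smul_right, crossInner, hbb, hdb, real_inner_comm d a,
    div_eq_inv_mul]
  ring

/-- Nonvanishing of the cross product for linearly independent vectors. -/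
lemma cross3_ne_zero (a b : E3) (h : LinearIndependent ℝ ![a, b]) : cross3 a b ≠ 0 := by
  have e := WithLp.linearEquiv 2 ℝ (Fin 3 → ℝ)
  have h' : LinearIndependent ℝ
      ((WithLp.linearEquiv 2 ℝ (Fin 3 → ℝ)) ∘ ![a, b]) :=
    h.map' _ (WithLp.linearEquiv 2 ℝ (Fin 3 → ℝ)).ker
  have hcomp : (WithLp.linearEquiv 2 ℝ (Fin 3 → ℝ)) ∘ ![a, b] =
      ![(fun i => a i), (fun i => b i)] := by
    funext j; fin_cases j <;> rfl
  rw [hcomp] at h'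
  have hne := crossProduct_ne_zero_iff_linearIndependent.mpr h'
  intro h0
  apply hne
  funext i
  have : cross3 a b i = 0 := by rw [h0]; rfl
  fin_cases i <;> simpa [cross3_apply, crossProduct] using this

/-- At a singular point, `⟪a, d⟫ ≠ 0`. -/
lemma singular_inner_ne_zero (a b d : E3) (u : ℝ)
    (hbb : ⟪b,b⟫ = (1:ℝ)) (hdb : ⟪d,b⟫ = (0:ℝ))
    (hcne : cross3 a b ≠ 0) (hsing : cross3 (a + u • d) b = 0) : ⟪a, d⟫ ≠ 0 := by
  have hsing' : cross3 a b = -(u • cross3 d b) := by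
    have h := cross_add_smul a d b u
    rw [hsing] at h
    linear_combination (norm := module) -h
  have h2 : ⟪cross3 d b, cross3 a b⟫ = ⟪a,d⟫ := by
    rw [crossInner, hbb, hdb, real_inner_comm d a]; ring
  have h1 : ⟪cross3 a b, cross3 a b⟫ = -(u * ⟪cross3 d b, cross3 a b⟫) := by
    nth_rewrite 1 [hsing']
    rw [inner_neg_left, real_inner_smul_left]
  have hkey : ‖cross3 a b‖^2 = -u * ⟪a, d⟫ := by
    rw [← real_inner_self_eq_norm_sq, h1, h2]; ring
  have hpos : (0:ℝ) < ‖cross3 a b‖ := norm_pos_iff.mpr hcne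
  intro h0
  rw [h0] at hkey
  nlinarith

/-- `∂λ/∂u = (γ'·ξ')/|γ' × ξ|` for `λ = det(F_s, F_u, ν)`; consequently, if `F`
is developable, then `∂λ/∂u ≠ 0` at every singular point, i.e. all singular points of `F`
are non-degenerate. -/
theorem stmt_4 (l : ℝ) (hl : 0 < l) (γ ξ : ℝ → E3)
    (hγ : ContDiff ℝ (⊤ : ℕ∞) γ) (hξ : ContDiff ℝ (⊤ : ℕ∞) ξ)
    (hper : ∀ s, γ (s + l) = γ s) (hodd : ∀ s, ξ (s + l) = -ξ s)
    (hunit : ∀ s, ‖deriv γ s‖ = 1) (hξunit : ∀ s, ‖ξ s‖ = 1)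
    (hindep : ∀ s, LinearIndependent ℝ ![deriv γ s, ξ s])
    (ν : ℝ → E3)
    (hν : ∀ s, ν s = ‖cross3 (deriv γ s) (ξ s)‖⁻¹ • cross3 (deriv γ s) (ξ s))
    (lam : ℝ → ℝ → ℝ)
    (hlam : ∀ s u, lam s u = det3 (deriv γ s + u • deriv ξ s) (ξ s) (ν s)) :
    (∀ s u : ℝ,
      deriv (lam s) u = ⟪deriv γ s, deriv ξ s⟫ / ‖cross3 (deriv γ s) (ξ s)‖) ∧
    ((∀ s, det3 (deriv γ s) (ξ s) (deriv ξ s) = 0) →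
      ∀ s u : ℝ, cross3 (deriv γ s + u • deriv ξ s) (ξ s) = 0 →
        ⟪deriv γ s, deriv ξ s⟫ ≠ 0 ∧ deriv (lam s) u ≠ 0) := by
  have hbb : ∀ s, ⟪ξ s, ξ s⟫ = (1:ℝ) := fun s => by
    rw [real_inner_self_eq_norm_sq, hξunit]; norm_num
  have hdb : ∀ s, ⟪deriv ξ s, ξ s⟫ = (0:ℝ) := by
    intro s
    have hd : HasDerivAt ξ (deriv ξ s) s := (hξ.differentiable (by simp) s).hasDerivAt
    have h1 : HasDerivAt (fun t => ⟪ξ t, ξ t⟫) (⟪ξ s, deriv ξ s⟫ + ⟪deriv ξ s, ξ s⟫) s :=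
      hd.inner ℝ hd
    have h2 : (fun t => ⟪ξ t, ξ t⟫) = fun _ => (1:ℝ) := funext fun t => hbb t
    rw [h2] at h1
    have h3 := h1.unique (hasDerivAt_const s 1)
    have h4 := real_inner_comm (ξ s) (deriv ξ s)
    linarith
  have part1 : ∀ s u : ℝ,
      deriv (lam s) u = ⟪deriv γ s, deriv ξ s⟫ / ‖cross3 (deriv γ s) (ξ s)‖ := by
    intro s u
    have hfun : lam s = fun u : ℝ =>
        det3 (deriv γ s) (ξ s) (ν s) + u * det3 (deriv ξ s) (ξ s) (ν s) :=
      funext fun u => by rw [hlam, det_add_smul]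
    have hder : HasDerivAt (fun u : ℝ =>
        det3 (deriv γ s) (ξ s) (ν s) + u * det3 (deriv ξ s) (ξ s) (ν s))
        (det3 (deriv ξ s) (ξ s) (ν s)) u := by
      simpa using ((hasDerivAt_id u).mul_const
        (det3 (deriv ξ s) (ξ s) (ν s))).const_add (det3 (deriv γ s) (ξ s) (ν s))
    rw [hfun, hder.deriv, hν, detval _ _ _ (hbb s) (hdb s)]
  refine ⟨part1, fun _hdev s u hsing => ?_⟩
  have hcne : cross3 (deriv γ s) (ξ s) ≠ 0 := cross3_ne_zero _ _ (hindep s)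
  have had : ⟪deriv γ s, deriv ξ s⟫ ≠ 0 :=
    singular_inner_ne_zero _ _ _ u (hbb s) (hdb s) hcne hsing
  exact ⟨had, by
    rw [part1 s u]
    exact div_ne_zero had (ne_of_gt (norm_pos_iff.mpr hcne))⟩
end
end

section
/- Let s₁ < s₂ be real numbers, let u : (s₁,s₂) → ℝ be a differentiable function such that u(s) → -∞ as s → s₁ from above and as s → s₂ from below, and let g : (s₁,s₂) → ℝ be a continuous function with |g(s)| ≤ 1 for all s ∈ (s₁,s₂). Then there exists s₀ ∈ (s₁,s₂) such that u'(s₀) + g(s₀) = 0. -/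
open Real Set Filter Topology

/-!
With `G` an antiderivative of `g`, the function `P = u + G` has derivative `u' + g` and, since
`G` is bounded, still tends to `-∞` at both endpoints. Then `exp ∘ P` tends to `0` at both
endpoints, so Rolle's theorem gives a critical point of `exp ∘ P`, which is one of `P`.
-/

theorem exists_hasDerivAt_eq_zero_of_tendsto_atBot {f f' : ℝ → ℝ} {a b : ℝ} (hab : a < b)
    (hfa : Tendsto f (𝓝[>] a) atBot) (hfb : Tendsto f (𝓝[<] b) atBot)
    (hff' : ∀ x ∈ Ioo a b, HasDerivAt f (f' x) x) :
    ∃ c ∈ Ioo a b, f' c = 0 := by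
  obtain ⟨c, hc, hc'⟩ := exists_hasDerivAt_eq_zero' hab
    (tendsto_exp_atBot.comp hfa) (tendsto_exp_atBot.comp hfb)
    (fun x hx ↦ (hff' x hx).exp)
  exact ⟨c, hc, (mul_eq_zero.1 hc').resolve_left (exp_pos _).ne'⟩

section IntervalIntegral

variable {g : ℝ → ℝ} {s : Set ℝ} {c x : ℝ}

theorem IsOpen.hasDerivAt_intervalIntegral_of_continuousOn (hs : IsOpen s) (hs' : s.OrdConnected)
    (hg : ContinuousOn g s) (hc : c ∈ s) (hx : x ∈ s) :
    HasDerivAt (fun y ↦ ∫ t in c..y, g t) (g x) x :=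
  intervalIntegral.integral_hasDerivAt_right
    ((hg.mono (hs'.uIcc_subset hc hx)).intervalIntegrable)
    (hg.stronglyMeasurableAtFilter hs x hx) (hg.continuousAt (hs.mem_nhds hx))

theorem intervalIntegral_le_of_abs_le_on_Ioo {a b C : ℝ} (hgC : ∀ y ∈ Ioo a b, |g y| ≤ C)
    (hc : c ∈ Ioo a b) (hx : x ∈ Ioo a b) :
    ∫ t in c..x, g t ≤ C * (b - a) := by
  have hsub : uIoc c x ⊆ Ioo a b :=
    uIoc_subset_uIcc.trans (ordConnected_Ioo.uIcc_subset hc hx)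
  have hlen : |x - c| ≤ b - a := abs_sub_le_iff.2 ⟨by linarith [hx.2, hc.1], by linarith [hc.2, hx.1]⟩
  have hC : 0 ≤ C := (abs_nonneg _).trans (hgC c hc)
  calc ∫ t in c..x, g t ≤ ‖∫ t in c..x, g t‖ := le_abs_self _
    _ ≤ C * |x - c| :=
      intervalIntegral.norm_integral_le_of_norm_le_const fun y hy ↦ hgC y (hsub hy)
    _ ≤ C * (b - a) := mul_le_mul_of_nonneg_left hlen hC

end IntervalIntegral

/-- a calculus lemma.  If `u` is differentiable on `(s₁,s₂)` and tends to `-∞`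
at both endpoints, and `g` is continuous with `|g| ≤ 1` on `(s₁,s₂)`, then
`u'(s₀) + g(s₀) = 0` for some interior point `s₀`. -/
theorem stmt_8 (s₁ s₂ : ℝ) (h12 : s₁ < s₂) (u g : ℝ → ℝ)
    (hu : ∀ s ∈ Set.Ioo s₁ s₂, DifferentiableAt ℝ u s)
    (hu1 : Filter.Tendsto u (𝓝[>] s₁) Filter.atBot)
    (hu2 : Filter.Tendsto u (𝓝[<] s₂) Filter.atBot)
    (hg : ContinuousOn g (Set.Ioo s₁ s₂))
    (hgb : ∀ s ∈ Set.Ioo s₁ s₂, |g s| ≤ 1) :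
    ∃ s₀ ∈ Set.Ioo s₁ s₂, deriv u s₀ + g s₀ = 0 := by
  obtain ⟨m, hm⟩ := nonempty_Ioo.2 h12
  set G := fun s ↦ ∫ t in m..s, g t
  have hG_le : ∀ s ∈ Ioo s₁ s₂, G s ≤ 1 * (s₂ - s₁) := fun s hs ↦
    intervalIntegral_le_of_abs_le_on_Ioo hgb hm hs
  have hP : ∀ l, Ioo s₁ s₂ ∈ l → Tendsto u l atBot → Tendsto (fun s ↦ G s + u s) l atBot :=
    fun l hl hul ↦ tendsto_atBot_add_left_of_ge' l _ (mem_of_superset hl hG_le) hul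
  obtain ⟨s₀, hs₀, h⟩ := exists_hasDerivAt_eq_zero_of_tendsto_atBot h12
    (hP _ (Ioo_mem_nhdsGT h12) hu1) (hP _ (Ioo_mem_nhdsLT h12) hu2)
    (fun s hs ↦ (isOpen_Ioo.hasDerivAt_intervalIntegral_of_continuousOn ordConnected_Ioo hg hm
      hs).add (hu s hs).hasDerivAt)
  exact ⟨s₀, hs₀, by linarith⟩
end

section
/- Let F(s,u) = γ(s) + uξ(s) be the asymptotic completion of a developable Möbius strip, i.e., det(γ'(s), ξ(s), ξ'(s)) = 0 for all s. Let (s₁,s₂) be a connected component of the open set {s ∈ ℝ : ξ'(s) ≠ 0}, and let u(s) := - |γ'(s) × ξ(s)|² / (γ'(s)·ξ'(s)) for s ∈ (s₁,s₂), so that s ↦ (s, u(s)) parametrizes the corresponding component of the singular set of F. Then there exists s₀ ∈ (s₁,s₂) such that u'(s₀) + γ'(s₀)·ξ(s₀) = 0; that is, the null direction ∂/∂s − (γ'(s₀)·ξ(s₀)) ∂/∂u is tangent to the singular curve at (s₀, u(s₀)). -/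
open scoped RealInnerProductSpace
open Real Set Filter Topology

noncomputable section

lemma lagrange (a b : E3) : ‖cross3 a b‖^2 = ‖a‖^2 * ‖b‖^2 - ⟪a,b⟫^2 := by
  rw [← real_inner_self_eq_norm_sq, ← real_inner_self_eq_norm_sq, ← real_inner_self_eq_norm_sq]
  simp only [inner3, cross3_apply]
  simp [Fin.isValue, Matrix.cons_val_zero, Matrix.cons_val_one, Matrix.head_cons]
  ring

lemma triple (a b c : E3) : cross3 (cross3 a b) c = ⟪a,c⟫ • b - ⟪b,c⟫ • a := by
  ext i
  fin_cases i <;>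
    simp [cross3_apply, inner3, PiLp.smul_apply, PiLp.sub_apply, smul_eq_mul,
      Fin.sum_univ_three] <;> ring

lemma unit_pair_inner_lt (a b : E3) (ha : ‖a‖ = 1) (hb : ‖b‖ = 1)
    (h : LinearIndependent ℝ ![a, b]) : ⟪a,b⟫^2 < 1 := by
  obtain ⟨-, hab⟩ := linearIndependent_fin2.mp h
  have hal : ‖cross3 a b‖^2 = 1 - ⟪a,b⟫^2 := by rw [lagrange, ha, hb]; ring
  have h1 : 0 ≤ 1 - ⟪a,b⟫^2 := hal ▸ sq_nonneg _
  rcases lt_or_eq_of_le h1 with h2 | h2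
  · linarith
  · exfalso
    set t : ℝ := ⟪a,b⟫ with ht
    have h3 : ⟪a,a⟫ = 1 := by rw [real_inner_self_eq_norm_sq, ha]; norm_num
    have h4 : ⟪b,b⟫ = 1 := by rw [real_inner_self_eq_norm_sq, hb]; norm_num
    have h5 : ⟪b,a⟫ = t := real_inner_comm a b
    have hz : ⟪a - t • b, a - t • b⟫ = 0 := by
      rw [inner_sub_left, inner_sub_right, inner_sub_right, real_inner_smul_left,
        real_inner_smul_left, real_inner_smul_right, real_inner_smul_right, h3, h4, h5]
      nlinarith
    rw [real_inner_self_eq_norm_sq] at hz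
    have hz2 : a - t • b = 0 := norm_eq_zero.mp (pow_eq_zero_iff two_ne_zero |>.mp hz)
    refine hab t ?_
    simp only [Matrix.cons_val_one, Matrix.head_cons, Matrix.cons_val_zero]
    exact (sub_eq_zero.mp hz2).symm

lemma exists_deriv_zero_of_tendsto_atBot (φ : ℝ → ℝ) (s₁ s₂ : ℝ) (h12 : s₁ < s₂)
    (hdiff : ∀ x ∈ Ioo s₁ s₂, DifferentiableAt ℝ φ x)
    (h1 : Tendsto φ (𝓝[>] s₁) atBot) (h2 : Tendsto φ (𝓝[<] s₂) atBot) :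
    ∃ x ∈ Ioo s₁ s₂, deriv φ x = 0 := by
  set m := (s₁ + s₂)/2 with hmdef
  have hm : m ∈ Ioo s₁ s₂ := ⟨by rw [hmdef]; linarith, by rw [hmdef]; linarith⟩
  obtain ⟨a, haφ, ham⟩ :=
    ((h1.eventually (eventually_lt_atBot (φ m))).and
      (eventually_of_mem (Ioo_mem_nhdsGT_of_mem ⟨le_rfl, hm.1⟩) (fun x hx => hx))).exists
  obtain ⟨b, hbφ, hbm⟩ :=
    ((h2.eventually (eventually_lt_atBot (φ m))).and
      (eventually_of_mem (Ioo_mem_nhdsLT_of_mem ⟨hm.2, le_rfl⟩) (fun x hx => hx))).exists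
  have hab : a < b := lt_trans ham.2 hbm.1
  have hsub : Icc a b ⊆ Ioo s₁ s₂ :=
    fun x hx => ⟨lt_of_lt_of_le ham.1 hx.1, lt_of_le_of_lt hx.2 hbm.2⟩
  have hcont : ContinuousOn φ (Icc a b) :=
    fun x hx => ((hdiff x (hsub hx)).continuousAt).continuousWithinAt
  obtain ⟨x, hxI, hxmax⟩ := isCompact_Icc.exists_isMaxOn (nonempty_Icc.mpr hab.le) hcont
  have hmIcc : m ∈ Icc a b := ⟨ham.2.le, hbm.1.le⟩
  have hφm : φ m ≤ φ x := hxmax hmIcc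
  have hxa : a < x := by
    rcases eq_or_lt_of_le hxI.1 with h | h
    · exact absurd (h ▸ hφm) (not_le.mpr haφ)
    · exact h
  have hxb : x < b := by
    rcases eq_or_lt_of_le hxI.2 with h | h
    · exact absurd (h ▸ hφm) (not_le.mpr hbφ)
    · exact h
  exact ⟨x, hsub hxI, (hxmax.isLocalMax (Icc_mem_nhds hxa hxb)).deriv_eq_zero⟩

lemma tendsto_aux (u I f g : ℝ → ℝ) (L : Filter ℝ) (c d : ℝ) (hc : 0 < c)
    (hf : Tendsto f L (𝓝 c)) (hg : Tendsto g L (𝓝[>] 0)) (hI : Tendsto I L (𝓝 d))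
    (hu : u =ᶠ[L] fun s => -(f s / g s)) :
    Tendsto (fun s => u s + I s) L atBot := by
  have h1 : Tendsto (fun s => f s / g s) L atTop := by
    simpa [div_eq_mul_inv] using Filter.Tendsto.pos_mul_atTop hc hf hg.inv_tendsto_nhdsGT_zero
  have h2 : Tendsto u L atBot :=
    Filter.Tendsto.congr' hu.symm (tendsto_neg_atTop_atBot.comp h1)
  exact tendsto_atBot_add_right_of_ge' L (d + 1) h2
    ((hI.eventually (gt_mem_nhds (lt_add_one d))).mono fun x hx => hx.le)

/-- on each connected component `(s₁,s₂)` of `{s : ξ'(s) ≠ 0}`, the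
singular-curve height `u(s) = -|γ' × ξ|²/(γ'·ξ')` has a point `s₀` where
`u'(s₀) + γ'(s₀)·ξ(s₀) = 0`, i.e. the null direction is tangent to the singular curve. -/
theorem stmt_9 (l : ℝ) (hl : 0 < l) (γ ξ : ℝ → E3)
    (hγ : ContDiff ℝ (⊤ : ℕ∞) γ) (hξ : ContDiff ℝ (⊤ : ℕ∞) ξ)
    (hper : ∀ s, γ (s + l) = γ s) (hodd : ∀ s, ξ (s + l) = -ξ s)
    (hunit : ∀ s, ‖deriv γ s‖ = 1) (hξunit : ∀ s, ‖ξ s‖ = 1)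
    (hindep : ∀ s, LinearIndependent ℝ ![deriv γ s, ξ s])
    (hflat : ∀ s, det3 (deriv γ s) (ξ s) (deriv ξ s) = 0)
    (s₁ s₂ : ℝ) (h12 : s₁ < s₂)
    (hz1 : deriv ξ s₁ = 0) (hz2 : deriv ξ s₂ = 0)
    (hnz : ∀ s ∈ Set.Ioo s₁ s₂, deriv ξ s ≠ 0)
    (u : ℝ → ℝ)
    (hu : ∀ s ∈ Set.Ioo s₁ s₂,
      u s = -‖cross3 (deriv γ s) (ξ s)‖ ^ 2 / ⟪deriv γ s, deriv ξ s⟫) :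
    ∃ s₀ ∈ Set.Ioo s₁ s₂, deriv u s₀ + ⟪deriv γ s₀, ξ s₀⟫ = 0 := by
  have hγ' : ContDiff ℝ ((⊤ : ℕ∞) : WithTop ℕ∞) (deriv γ) := (contDiff_infty_iff_deriv.mp (hγ.of_le (by simp))).2
  have hξ' : ContDiff ℝ ((⊤ : ℕ∞) : WithTop ℕ∞) (deriv ξ) := (contDiff_infty_iff_deriv.mp (hξ.of_le (by simp))).2
  have hξd : Differentiable ℝ ξ := hξ.differentiable (by simp)
  have hγ'd : Differentiable ℝ (deriv γ) := (contDiff_infty_iff_deriv.mp hγ').1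
  have hξ'd : Differentiable ℝ (deriv ξ) := (contDiff_infty_iff_deriv.mp hξ').1
  have hpdiff : Differentiable ℝ (fun s => ⟪deriv γ s, ξ s⟫) :=
    fun x => DifferentiableAt.inner ℝ (hγ'd x) (hξd x)
  have hgdiff : Differentiable ℝ (fun s => ⟪deriv γ s, deriv ξ s⟫) :=
    fun x => DifferentiableAt.inner ℝ (hγ'd x) (hξ'd x)
  have hpcont : Continuous (fun s => ⟪deriv γ s, ξ s⟫) := hpdiff.continuous
  have hgcont : Continuous (fun s => ⟪deriv γ s, deriv ξ s⟫) := hgdiff.continuous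
  -- ξ ⟂ ξ'
  have horth : ∀ t, ⟪ξ t, deriv ξ t⟫ = 0 := by
    intro t
    have h1 : HasDerivAt (fun s => ⟪ξ s, ξ s⟫) (⟪ξ t, deriv ξ t⟫ + ⟪deriv ξ t, ξ t⟫) t :=
      HasDerivAt.inner ℝ (hξd t).hasDerivAt (hξd t).hasDerivAt
    have h2 : (fun s : ℝ => ⟪ξ s, ξ s⟫) = fun _ => (1:ℝ) := by
      funext s; rw [real_inner_self_eq_norm_sq, hξunit]; norm_num
    rw [h2] at h1
    have h3 := h1.unique (hasDerivAt_const t (1:ℝ))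
    have h4 : ⟪deriv ξ t, ξ t⟫ = ⟪ξ t, deriv ξ t⟫ := real_inner_comm _ _
    linarith
  have hone : ∀ s, 0 < 1 - ⟪deriv γ s, ξ s⟫ ^ 2 := by
    intro s
    have h := unit_pair_inner_lt _ _ (hunit s) (hξunit s) (hindep s)
    linarith
  -- the denominator does not vanish on the interval
  have hgne : ∀ s ∈ Ioo s₁ s₂, ⟪deriv γ s, deriv ξ s⟫ ≠ 0 := by
    intro s hs h0
    have hwv : ⟪cross3 (deriv γ s) (ξ s), deriv ξ s⟫ = 0 := by rw [← det3_eq]; exact hflat s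
    have hcr : cross3 (cross3 (deriv γ s) (ξ s)) (deriv ξ s) = 0 := by
      rw [triple, h0, horth s]; simp
    have hl := lagrange (cross3 (deriv γ s) (ξ s)) (deriv ξ s)
    rw [hcr, hwv] at hl
    have hw : ‖cross3 (deriv γ s) (ξ s)‖ ^ 2 = 1 - ⟪deriv γ s, ξ s⟫ ^ 2 := by
      rw [lagrange, hunit, hξunit]; ring
    rw [hw, norm_zero] at hl
    have hv : (0:ℝ) < ‖deriv ξ s‖ := norm_pos_iff.mpr (hnz s hs)
    nlinarith [mul_pos (hone s) (pow_pos hv 2), hl]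
  -- the formula for u on the interval
  have hu' : ∀ s ∈ Ioo s₁ s₂,
      u s = -((1 - ⟪deriv γ s, ξ s⟫ ^ 2) / ⟪deriv γ s, deriv ξ s⟫) := by
    intro s hs
    rw [hu s hs]
    have hw : ‖cross3 (deriv γ s) (ξ s)‖ ^ 2 = 1 - ⟪deriv γ s, ξ s⟫ ^ 2 := by
      rw [lagrange, hunit, hξunit]; ring
    rw [hw]
    ring
  have hg1 : ⟪deriv γ s₁, deriv ξ s₁⟫ = 0 := by simp [hz1]
  have hg2 : ⟪deriv γ s₂, deriv ξ s₂⟫ = 0 := by simp [hz2]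
  -- the antiderivative of p
  have hIderiv : ∀ x : ℝ, HasDerivAt (fun y => ∫ t in s₁..y, ⟪deriv γ t, ξ t⟫) ⟪deriv γ x, ξ x⟫ x :=
    fun x =>
    intervalIntegral.integral_hasDerivAt_right (hpcont.intervalIntegrable _ _)
      (hpcont.stronglyMeasurableAtFilter _ _) hpcont.continuousAt
  have hIdiff : Differentiable ℝ (fun y => ∫ t in s₁..y, ⟪deriv γ t, ξ t⟫) :=
    fun x => (hIderiv x).differentiableAt
  have hIcont : Continuous (fun y => ∫ t in s₁..y, ⟪deriv γ t, ξ t⟫) := hIdiff.continuous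
  -- differentiability of u on the interval
  have hudiff : ∀ x ∈ Ioo s₁ s₂, DifferentiableAt ℝ u x := by
    intro x hx
    have hqd : DifferentiableAt ℝ
        (fun s => -((1 - ⟪deriv γ s, ξ s⟫ ^ 2) / ⟪deriv γ s, deriv ξ s⟫)) x :=
      (((differentiableAt_const _).sub ((hpdiff x).pow 2)).div (hgdiff x) (hgne x hx)).neg
    exact hqd.congr_of_eventuallyEq (eventually_of_mem (isOpen_Ioo.mem_nhds hx) hu')
  have hmem1 : Ioo s₁ s₂ ∈ 𝓝[>] s₁ := Ioo_mem_nhdsGT_of_mem ⟨le_rfl, h12⟩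
  have hmem2 : Ioo s₁ s₂ ∈ 𝓝[<] s₂ := Ioo_mem_nhdsLT_of_mem ⟨h12, le_rfl⟩
  -- sign dichotomy for the denominator
  have key : ∀ a ∈ Ioo s₁ s₂, ∀ b ∈ Ioo s₁ s₂,
      ⟪deriv γ a, deriv ξ a⟫ < 0 → 0 < ⟪deriv γ b, deriv ξ b⟫ → False := by
    intro a ha b hb hga hgb
    have h0m : (0:ℝ) ∈ uIcc (⟪deriv γ a, deriv ξ a⟫) (⟪deriv γ b, deriv ξ b⟫) := by
      rw [Set.mem_uIcc]; exact Or.inl ⟨hga.le, hgb.le⟩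
    obtain ⟨t, ht, h0t⟩ := intermediate_value_uIcc hgcont.continuousOn h0m
    exact hgne t ((Set.ordConnected_Ioo.uIcc_subset ha hb) ht) h0t
  have hm : (s₁ + s₂)/2 ∈ Ioo s₁ s₂ := ⟨by linarith, by linarith⟩
  have hsign : (∀ s ∈ Ioo s₁ s₂, 0 < ⟪deriv γ s, deriv ξ s⟫) ∨
      (∀ s ∈ Ioo s₁ s₂, ⟪deriv γ s, deriv ξ s⟫ < 0) := by
    rcases (hgne _ hm).lt_or_gt with h | h
    · right; intro s hs
      rcases (hgne s hs).lt_or_gt with h' | h'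
      · exact h'
      · exact (key _ hm _ hs h h').elim
    · left; intro s hs
      rcases (hgne s hs).lt_or_gt with h' | h'
      · exact (key _ hs _ hm h' h).elim
      · exact h'
  -- tendsto of denominator to 0 at the endpoints
  have hgt1 : Tendsto (fun s => ⟪deriv γ s, deriv ξ s⟫) (𝓝[>] s₁) (𝓝 0) := by
    have h := (hgcont.tendsto s₁).mono_left (nhdsWithin_le_nhds : 𝓝[>] s₁ ≤ 𝓝 s₁)
    simpa [hg1] using h
  have hgt2 : Tendsto (fun s => ⟪deriv γ s, deriv ξ s⟫) (𝓝[<] s₂) (𝓝 0) := by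
    have h := (hgcont.tendsto s₂).mono_left (nhdsWithin_le_nhds : 𝓝[<] s₂ ≤ 𝓝 s₂)
    simpa [hg2] using h
  have hf1 : Tendsto (fun s => 1 - ⟪deriv γ s, ξ s⟫ ^ 2) (𝓝[>] s₁)
      (𝓝 (1 - ⟪deriv γ s₁, ξ s₁⟫ ^ 2)) :=
    ((continuous_const.sub (hpcont.pow 2)).continuousAt).mono_left nhdsWithin_le_nhds
  have hf2 : Tendsto (fun s => 1 - ⟪deriv γ s, ξ s⟫ ^ 2) (𝓝[<] s₂)
      (𝓝 (1 - ⟪deriv γ s₂, ξ s₂⟫ ^ 2)) :=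
    ((continuous_const.sub (hpcont.pow 2)).continuousAt).mono_left nhdsWithin_le_nhds
  have hI1 : Tendsto (fun y => ∫ t in s₁..y, ⟪deriv γ t, ξ t⟫) (𝓝[>] s₁)
      (𝓝 (∫ t in s₁..s₁, ⟪deriv γ t, ξ t⟫)) :=
    hIcont.continuousAt.mono_left nhdsWithin_le_nhds
  have hI2 : Tendsto (fun y => ∫ t in s₁..y, ⟪deriv γ t, ξ t⟫) (𝓝[<] s₂)
      (𝓝 (∫ t in s₁..s₂, ⟪deriv γ t, ξ t⟫)) :=
    hIcont.continuousAt.mono_left nhdsWithin_le_nhds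
  rcases hsign with hpos | hneg
  · -- g > 0 on the interval : u → -∞ at both ends
    have hgp1 : Tendsto (fun s => ⟪deriv γ s, deriv ξ s⟫) (𝓝[>] s₁) (𝓝[>] 0) := by
      rw [tendsto_nhdsWithin_iff]
      exact ⟨hgt1, eventually_of_mem hmem1 (fun x hx => hpos x hx)⟩
    have hgp2 : Tendsto (fun s => ⟪deriv γ s, deriv ξ s⟫) (𝓝[<] s₂) (𝓝[>] 0) := by
      rw [tendsto_nhdsWithin_iff]
      exact ⟨hgt2, eventually_of_mem hmem2 (fun x hx => hpos x hx)⟩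
    have hb1 : Tendsto (fun s => u s + ∫ t in s₁..s, ⟪deriv γ t, ξ t⟫) (𝓝[>] s₁) atBot :=
      tendsto_aux u _ _ _ _ _ _ (hone s₁) hf1 hgp1 hI1 (eventually_of_mem hmem1 hu')
    have hb2 : Tendsto (fun s => u s + ∫ t in s₁..s, ⟪deriv γ t, ξ t⟫) (𝓝[<] s₂) atBot :=
      tendsto_aux u _ _ _ _ _ _ (hone s₂) hf2 hgp2 hI2 (eventually_of_mem hmem2 hu')
    obtain ⟨x, hx, hdz⟩ := exists_deriv_zero_of_tendsto_atBot _ s₁ s₂ h12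
      (fun x hx => (hudiff x hx).add (hIderiv x).differentiableAt) hb1 hb2
    refine ⟨x, hx, ?_⟩
    have hd : deriv (fun s => u s + ∫ t in s₁..s, ⟪deriv γ t, ξ t⟫) x
        = deriv u x + ⟪deriv γ x, ξ x⟫ := by
      exact ((hudiff x hx).hasDerivAt.add (hIderiv x)).deriv
    rw [← hd]; exact hdz
  · -- g < 0 on the interval : u → +∞ at both ends; apply the previous to -u - I
    have hgp1 : Tendsto (fun s => -⟪deriv γ s, deriv ξ s⟫) (𝓝[>] s₁) (𝓝[>] 0) := by
      rw [tendsto_nhdsWithin_iff]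
      refine ⟨by simpa using hgt1.neg, eventually_of_mem hmem1 (fun x hx => ?_)⟩
      simpa using hneg x hx
    have hgp2 : Tendsto (fun s => -⟪deriv γ s, deriv ξ s⟫) (𝓝[<] s₂) (𝓝[>] 0) := by
      rw [tendsto_nhdsWithin_iff]
      refine ⟨by simpa using hgt2.neg, eventually_of_mem hmem2 (fun x hx => ?_)⟩
      simpa using hneg x hx
    have hueq : ∀ s ∈ Ioo s₁ s₂,
        -u s = -((1 - ⟪deriv γ s, ξ s⟫ ^ 2) / -⟪deriv γ s, deriv ξ s⟫) := by
      intro s hs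
      rw [hu' s hs, div_neg, neg_neg]
    have hb1 : Tendsto (fun s => -u s + -∫ t in s₁..s, ⟪deriv γ t, ξ t⟫) (𝓝[>] s₁) atBot :=
      tendsto_aux _ _ _ _ _ _ _ (hone s₁) hf1 hgp1 hI1.neg (eventually_of_mem hmem1 hueq)
    have hb2 : Tendsto (fun s => -u s + -∫ t in s₁..s, ⟪deriv γ t, ξ t⟫) (𝓝[<] s₂) atBot :=
      tendsto_aux _ _ _ _ _ _ _ (hone s₂) hf2 hgp2 hI2.neg (eventually_of_mem hmem2 hueq)
    obtain ⟨x, hx, hdz⟩ := exists_deriv_zero_of_tendsto_atBot _ s₁ s₂ h12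
      (fun x hx => ((hudiff x hx).neg).add (hIderiv x).differentiableAt.neg) hb1 hb2
    refine ⟨x, hx, ?_⟩
    have hd : deriv (fun s => -u s + -∫ t in s₁..s, ⟪deriv γ t, ξ t⟫) x
        = -deriv u x + -⟪deriv γ x, ξ x⟫ := by
      exact ((hudiff x hx).hasDerivAt.neg.add (hIderiv x).neg).deriv
    have hdz' : deriv (fun s => -u s + -∫ t in s₁..s, ⟪deriv γ t, ξ t⟫) x = 0 := hdz
    rw [hd] at hdz'
    linarith
end
end

section
/- Let γ : ℝ → ℝ³ and ξ : ℝ → ℝ³ be C^∞ maps with |γ'(s)| = 1, γ''(s)·ξ(s) = 0, |ξ(s) × γ'(s)| = 1, and det(γ'(s), ξ(s), ξ'(s)) = 0 for all s ∈ ℝ. Define σ̂(s) := γ'(s)·ξ(s). Then for every s ∈ ℝ one has ξ'(s) = σ̂'(s) · γ'(s). In particular, ξ'(s) = 0 if and only if σ̂'(s) = 0. -/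
open scoped RealInnerProductSpace
open Real Set Filter Topology

noncomputable section

lemma inner_coords (a b : E3) : ⟪a, b⟫ = a 0 * b 0 + a 1 * b 1 + a 2 * b 2 := by
  simp [PiLp.inner_apply, RCLike.inner_apply, Fin.sum_univ_three, mul_comm]

lemma cross3_inner_self (a b : E3) :
    ⟪cross3 a b, cross3 a b⟫ = (a 1 * b 2 - a 2 * b 1) ^ 2 + (a 2 * b 0 - a 0 * b 2) ^ 2
      + (a 0 * b 1 - a 1 * b 0) ^ 2 := by
  simp only [inner_coords, cross3, WithLp.equiv_symm_apply, PiLp.toLp_apply]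
  simp [Fin.isValue]
  ring

lemma lagrange3 (a b : E3) :
    ⟪cross3 a b, cross3 a b⟫ = ⟪a, a⟫ * ⟪b, b⟫ - ⟪a, b⟫ ^ 2 := by
  simp only [inner_coords, cross3, WithLp.equiv_symm_apply, PiLp.toLp_apply]
  simp [Fin.isValue]
  ring

lemma det3_coords (a b c : E3) :
    det3 a b c = a 0 * (b 1 * c 2 - b 2 * c 1) - a 1 * (b 0 * c 2 - b 2 * c 0)
      + a 2 * (b 0 * c 1 - b 1 * c 0) := by
  simp [det3, Matrix.det_fin_three]
  ring

set_option maxHeartbeats 1000000 in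
/-- for a flat rectifying strip (γ a unit-speed geodesic, ξ normalized so
that `|ξ × γ'| = 1`), with conical curvature `σ̂ = γ'·ξ`, one has `ξ' = σ̂' γ'`;
in particular `ξ'(s) = 0` iff `σ̂'(s) = 0`. -/
theorem stmt_13 (γ ξ : ℝ → E3)
    (hγ : ContDiff ℝ (⊤ : ℕ∞) γ) (hξ : ContDiff ℝ (⊤ : ℕ∞) ξ)
    (hunit : ∀ s, ‖deriv γ s‖ = 1)
    (hgeo : ∀ s, ⟪deriv (deriv γ) s, ξ s⟫ = 0)
    (hnorm : ∀ s, ‖cross3 (ξ s) (deriv γ s)‖ = 1)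
    (hflat : ∀ s, det3 (deriv γ s) (ξ s) (deriv ξ s) = 0)
    (σ : ℝ → ℝ) (hσ : ∀ s, σ s = ⟪deriv γ s, ξ s⟫) :
    ∀ s : ℝ,
      deriv ξ s = deriv σ s • deriv γ s ∧
      (deriv ξ s = 0 ↔ deriv σ s = 0) := by
  have hunit' : ∀ u, ⟪deriv γ u, deriv γ u⟫ = 1 := fun u => by
    rw [real_inner_self_eq_norm_mul_norm, hunit u]; ring
  have hγ' : ContDiff ℝ ((⊤ : ℕ∞) : WithTop ℕ∞) γ := hγ.of_le (by simp)
  have hγd : Differentiable ℝ (deriv γ) :=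
    (contDiff_infty_iff_deriv.mp (contDiff_infty_iff_deriv.mp hγ').2).1
  have main : ∀ s : ℝ, deriv ξ s = deriv σ s • deriv γ s := by
    intro s
    have hT : HasDerivAt (deriv γ) (deriv (deriv γ) s) s :=
      (hγd s).hasDerivAt
    have hX : HasDerivAt ξ (deriv ξ s) s := ((hξ.differentiable (by simp)) s).hasDerivAt
    set t := deriv γ s with ht
    set p := deriv (deriv γ) s with hp
    set x := ξ s with hx
    set y := deriv ξ s with hy
    -- derivative of σ
    have hσeq : σ = fun u => ⟪deriv γ u, ξ u⟫ := funext hσ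
    have hσd : HasDerivAt σ (⟪t, y⟫ + ⟪p, x⟫) s := by
      rw [hσeq]; exact hT.inner ℝ hX
    set c := deriv σ s with hc
    have hcval : c = ⟪t, y⟫ := by
      have := hσd.deriv
      rw [hgeo s, add_zero] at this
      rw [hc, this]
    -- |ξ|² - σ² is constant 1
    have hgfun : (fun u => ⟪ξ u, ξ u⟫ - σ u ^ 2) = fun _ => (1 : ℝ) := by
      funext u
      have hl := lagrange3 (ξ u) (deriv γ u)
      have hn : ⟪cross3 (ξ u) (deriv γ u), cross3 (ξ u) (deriv γ u)⟫ = 1 := by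
        rw [real_inner_self_eq_norm_mul_norm, hnorm u]; ring
      rw [hn, hunit' u, mul_one] at hl
      rw [hσ u]
      have h2 := real_inner_comm (ξ u) (deriv γ u)
      have h3 : ⟪ξ u, deriv γ u⟫ ^ 2 = ⟪deriv γ u, ξ u⟫ ^ 2 := by rw [h2]
      linarith [hl, h3]
    have hσds : HasDerivAt σ c s := hc ▸ hσd.deriv ▸ hσd
    have hgd : HasDerivAt (fun u => ⟪ξ u, ξ u⟫ - σ u ^ 2)
        ((⟪x, y⟫ + ⟪y, x⟫) - 2 * σ s ^ 1 * c) s := by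
      exact (hX.inner ℝ hX).sub ((hσds.pow 2).congr_deriv (by push_cast; ring))
    have hxy : ⟪x, y⟫ + ⟪y, x⟫ - 2 * σ s ^ 1 * c = 0 := by
      have h0 : HasDerivAt (fun _ : ℝ => (1 : ℝ)) (⟪x, y⟫ + ⟪y, x⟫ - 2 * σ s ^ 1 * c) s := by
        rw [← hgfun]; exact hgd
      exact ((hasDerivAt_const s (1 : ℝ)).unique h0).symm
    have hxyc : ⟪x, y⟫ = σ s * c := by
      have h2 := real_inner_comm x y
      have h3 : σ s ^ 1 = σ s := pow_one _
      linarith [hxy, h2]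
    -- coordinate versions
    have e1 : t 0 ^ 2 + t 1 ^ 2 + t 2 ^ 2 = 1 := by
      have := hunit' s; rw [← ht] at this; rw [inner_coords] at this; nlinarith [this]
    have e2 : t 0 * y 0 + t 1 * y 1 + t 2 * y 2 = c := by
      rw [hcval, inner_coords]
    have e3 : x 0 * y 0 + x 1 * y 1 + x 2 * y 2 = σ s * c := by
      rw [← hxyc, inner_coords]
    have e4 : t 0 * (x 1 * y 2 - x 2 * y 1) - t 1 * (x 0 * y 2 - x 2 * y 0)
        + t 2 * (x 0 * y 1 - x 1 * y 0) = 0 := by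
      have := hflat s; rw [det3_coords] at this; rw [← ht, ← hx, ← hy] at this; exact this
    have e5 : (x 1 * t 2 - x 2 * t 1) ^ 2 + (x 2 * t 0 - x 0 * t 2) ^ 2
        + (x 0 * t 1 - x 1 * t 0) ^ 2 = 1 := by
      have hn : ⟪cross3 x t, cross3 x t⟫ = 1 := by
        rw [real_inner_self_eq_norm_mul_norm, ht, hx, hnorm s]; ring
      rw [cross3_inner_self] at hn
      exact hn
    have eσ : σ s = t 0 * x 0 + t 1 * x 1 + t 2 * x 2 := by
      rw [hσ s, inner_coords]
    -- the algebraic finish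
    set z0 := y 0 - c * t 0 with hz0
    set z1 := y 1 - c * t 1 with hz1
    set z2 := y 2 - c * t 2 with hz2
    have zt : t 0 * z0 + t 1 * z1 + t 2 * z2 = 0 := by
      rw [hz0, hz1, hz2]; linear_combination e2 - c * e1
    have zx : x 0 * z0 + x 1 * z1 + x 2 * z2 = 0 := by
      rw [hz0, hz1, hz2]; linear_combination e3 + c * eσ
    have zw : (x 1 * t 2 - x 2 * t 1) * z0 + (x 2 * t 0 - x 0 * t 2) * z1
        + (x 0 * t 1 - x 1 * t 0) * z2 = 0 := by
      rw [hz0, hz1, hz2]; linear_combination -e4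
    have hzsq : z0 ^ 2 + z1 ^ 2 + z2 ^ 2 = 0 := by
      have lag : (z0 ^ 2 + z1 ^ 2 + z2 ^ 2) *
          ((x 1 * t 2 - x 2 * t 1) ^ 2 + (x 2 * t 0 - x 0 * t 2) ^ 2
            + (x 0 * t 1 - x 1 * t 0) ^ 2)
          = ((x 1 * t 2 - x 2 * t 1) * z0 + (x 2 * t 0 - x 0 * t 2) * z1
              + (x 0 * t 1 - x 1 * t 0) * z2) ^ 2
          + (x 0 * (t 0 * z0 + t 1 * z1 + t 2 * z2) - t 0 * (x 0 * z0 + x 1 * z1 + x 2 * z2)) ^ 2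
          + (x 1 * (t 0 * z0 + t 1 * z1 + t 2 * z2) - t 1 * (x 0 * z0 + x 1 * z1 + x 2 * z2)) ^ 2
          + (x 2 * (t 0 * z0 + t 1 * z1 + t 2 * z2) - t 2 * (x 0 * z0 + x 1 * z1 + x 2 * z2)) ^ 2 := by
        ring
      rw [e5, zt, zx, zw, mul_one] at lag
      simpa using lag
    have hz0' : z0 = 0 := pow_eq_zero_iff two_ne_zero |>.mp
      (by linarith [sq_nonneg z0, sq_nonneg z1, sq_nonneg z2])
    have hz1' : z1 = 0 := pow_eq_zero_iff two_ne_zero |>.mp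
      (by linarith [sq_nonneg z0, sq_nonneg z1, sq_nonneg z2])
    have hz2' : z2 = 0 := pow_eq_zero_iff two_ne_zero |>.mp
      (by linarith [sq_nonneg z0, sq_nonneg z1, sq_nonneg z2])
    have g0 : y 0 = c * t 0 := by rw [hz0] at hz0'; linarith
    have g1 : y 1 = c * t 1 := by rw [hz1] at hz1'; linarith
    have g2 : y 2 = c * t 2 := by rw [hz2] at hz2'; linarith
    ext i
    fin_cases i <;> simp [PiLp.smul_apply, smul_eq_mul, g0, g1, g2]
  intro s
  refine ⟨main s, ?_, ?_⟩
  · intro h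
    by_contra hne
    have := main s
    rw [h] at this
    have ht0 : deriv γ s = 0 := by
      have := this.symm
      rw [smul_eq_zero] at this
      rcases this with h1 | h2
      · exact absurd h1 hne
      · exact h2
    have := hunit s
    rw [ht0, norm_zero] at this
    norm_num at this
  · intro h
    rw [main s, h, zero_smul]
end
end
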